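/- Let ρ > 0, M > 0, n ≥ 2 an integer, ν ≥ 1, and σ > 1 a real with q := √(ν(n+1)M) / (σ^{(n-2)/2} ln σ) < 1. For X = M ρ^n x^{n+1}/(1-ρx) ∂_x, each term of the series ∑_{k≥1} (k/(k+1)!) X^{k+1} has ‖·‖-norm in the Banach space L_{σρ} bounded by (M/σ^n)·(√(ν(n+1)M)/(σ^{(n-2)/2} ln σ))^{2k} / √(kπ), and therefore the series converges in L_{σρ} with ‖∑_{k≥1} (k/(k+1)!) X^{k+1}‖_{σρ} ≤ (M/(√π σ^n)) · q²/(1-q²). -/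

import Mathlib

/-- Taylor coefficient sequence of `C · x^s / (1-ρx)^α` (for `α ≥ 1`). -/
noncomputable def coefF (C ρ : ℝ) (s α : ℕ) : ℕ → ℝ := fun m =>
  if s ≤ m then C * (Nat.choose (m - s + (α - 1)) (α - 1)) * ρ ^ (m - s) else 0

/-- Coefficient sequence of `f · g'` (action of `f ∂ₓ` on `g ∂ₓ`). -/
noncomputable def applyVF (f g : ℕ → ℝ) : ℕ → ℝ := fun m =>
  ∑ i ∈ Finset.range (m + 1), f i * ((m - i + 1 : ℕ) : ℝ) * g (m - i + 1)

/-- Coefficient sequence of `X^{k+1}` for `X = M ρ^n x^{n+1}/(1-ρx) ∂ₓ`. -/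
noncomputable def iterX (M ρ : ℝ) (n : ℕ) (k : ℕ) : ℕ → ℝ :=
  (fun g => applyVF (coefF (M * ρ ^ n) ρ (n + 1) 1) g)^[k]
    (coefF (M * ρ ^ n) ρ (n + 1) 1)

/-! Everything is done on coefficient sequences, comparing them termwise with majorant series:
`coefF C ρ s α` is the Taylor sequence of `C x^s/(1-ρx)^α`. The derivative of
`x^s/(1-ρx)^{β+1}` is majorized by `s x^{s-1}/(1-ρx)^{β+2}` when `β < s`, and multiplying by
`x^{n+1}/(1-ρx)` is an identity of power series, so by induction `X^{k+1}` is majorized by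
`(n+1)(2n+1)⋯(kn+1) M^{k+1} ρ^{(k+1)n} x^{(k+1)n+1}/(1-ρx)^{2k+1}`. Its coefficients involve
`C(j+2k, 2k) ≤ σ^{j+2k}/((ln σ)^{2k} √(kπ))`, which follows from `t^r ≤ (r/e)^r e^t` and
Stirling's lower bound for `r!`; this makes each term at most `(M/σ^n) q^{2k}/√(kπ)` in the
weighted norm, and the series is then dominated by a geometric series in `q²`. -/

open Finset PowerSeries Real

lemma coefF_nonneg {C₀ ρ : ℝ} (hC : 0 ≤ C₀) (hρ : 0 ≤ ρ) (s α : ℕ) : 0 ≤ coefF C₀ ρ s α := by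
  intro m
  unfold coefF
  split_ifs <;> positivity

lemma mk_coefF (C₀ ρ : ℝ) (s β : ℕ) :
    mk (coefF C₀ ρ s (β + 1)) = C C₀ * X ^ s * rescale ρ (invOneSubPow ℝ (β + 1)).val := by
  ext m
  rw [mul_assoc, coeff_C_mul, coeff_X_pow_mul', coeff_mk, coefF]
  split_ifs
  · rw [coeff_rescale, invOneSubPow_val_succ_eq_mk_add_choose, coeff_mk, add_tsub_cancel_right,
      add_comm β]
    ring
  · rw [mul_zero]

lemma sum_range_coefF_mul_coefF (c B ρ : ℝ) (a b β m : ℕ) :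
    ∑ i ∈ range (m + 1), coefF c ρ a 1 i * coefF B ρ b (β + 1) (m - i) =
      coefF (c * B) ρ (a + b) (β + 2) m := by
  have hprod : mk (coefF c ρ a 1) * mk (coefF B ρ b (β + 1)) =
      mk (coefF (c * B) ρ (a + b) (β + 2)) := by
    rw [mk_coefF (β := 0), mk_coefF, mk_coefF, show β + 2 = 1 + (β + 1) by ring,
      invOneSubPow_add (S := ℝ) (d := 1), Units.val_mul, map_mul, map_mul, pow_add]
    ring
  simpa [coeff_mul, Nat.sum_antidiagonal_eq_sum_range_succ_mk] using congrArg (coeff m) hprod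

lemma add_mul_choose_le_mul_choose_succ {u s β : ℕ} (h : β + 1 ≤ s) :
    (u + s) * (u + β).choose β ≤ s * (u + β + 1).choose (β + 1) := by
  have key := Nat.add_one_mul_choose_eq (u + β) β
  refine Nat.le_of_mul_le_mul_right ?_ β.succ_pos
  nlinarith [Nat.mul_le_mul_right ((u + β).choose β) (Nat.mul_le_mul_left u h),
    congrArg (s * ·) key]

lemma succ_mul_coefF_succ_le {A ρ : ℝ} (hA : 0 ≤ A) (hρ : 0 ≤ ρ) {s β : ℕ} (hs : β + 1 ≤ s)
    (j : ℕ) :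
    ((j + 1 : ℕ) : ℝ) * coefF A ρ s (β + 1) (j + 1) ≤ coefF (s * A) ρ (s - 1) (β + 2) j := by
  unfold coefF
  by_cases h : s ≤ j + 1
  · rw [if_pos h, if_pos (by omega)]
    obtain ⟨u, hu⟩ : ∃ u, j + 1 = u + s := ⟨j + 1 - s, by omega⟩
    rw [show j - (s - 1) = u by omega, show j + 1 - s = u by omega, add_tsub_cancel_right,
      show β + 2 - 1 = β + 1 by omega, hu]
    have hnat : ((u + s) * (u + β).choose β : ℝ) ≤ s * (u + β + 1).choose (β + 1) := by
      exact_mod_cast add_mul_choose_le_mul_choose_succ hs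
    calc ((u + s : ℕ) : ℝ) * (A * (u + β).choose β * ρ ^ u)
        = ((u + s) * (u + β).choose β : ℝ) * (A * ρ ^ u) := by push_cast; ring
      _ ≤ (s * (u + β + 1).choose (β + 1) : ℝ) * (A * ρ ^ u) := by gcongr
      _ = s * A * (u + (β + 1)).choose (β + 1) * ρ ^ u := by rw [← add_assoc]; ring
  · rw [if_neg h, if_neg (by omega), mul_zero]

lemma applyVF_mono {f g h : ℕ → ℝ} (hf : 0 ≤ f) (hgh : g ≤ h) : applyVF f g ≤ applyVF f h := by
  intro m
  unfold applyVF
  gcongr with i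
  · exact mul_nonneg (hf i) (Nat.cast_nonneg _)
  · exact hgh _

lemma applyVF_nonneg {f g : ℕ → ℝ} (hf : 0 ≤ f) (hg : 0 ≤ g) : 0 ≤ applyVF f g := by
  intro m
  unfold applyVF
  exact sum_nonneg fun i _ => mul_nonneg (mul_nonneg (hf i) (Nat.cast_nonneg _)) (hg _)

lemma applyVF_coefF_le {c A ρ : ℝ} (hc : 0 ≤ c) (hA : 0 ≤ A) (hρ : 0 ≤ ρ) {a s β : ℕ}
    (hs : β + 1 ≤ s) :
    applyVF (coefF c ρ a 1) (coefF A ρ s (β + 1)) ≤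
      coefF (c * (s * A)) ρ (a + (s - 1)) (β + 3) := by
  intro m
  rw [← sum_range_coefF_mul_coefF]
  unfold applyVF
  refine sum_le_sum fun i _ => ?_
  rw [mul_assoc]
  exact mul_le_mul_of_nonneg_left (succ_mul_coefF_succ_le hA hρ hs (m - i))
    (coefF_nonneg hc hρ a 1 i)

noncomputable def iterMajorant (M ρ : ℝ) (n k : ℕ) : ℕ → ℝ :=
  coefF ((∏ j ∈ range k, ((j + 1) * n + 1) : ℕ) * M ^ (k + 1) * ρ ^ ((k + 1) * n)) ρ
    ((k + 1) * n + 1) (2 * k + 1)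

lemma iterX_succ (M ρ : ℝ) (n k : ℕ) :
    iterX M ρ n (k + 1) = applyVF (coefF (M * ρ ^ n) ρ (n + 1) 1) (iterX M ρ n k) :=
  Function.iterate_succ_apply' ..

lemma applyVF_iterMajorant_le {M ρ : ℝ} (hM : 0 ≤ M) (hρ : 0 ≤ ρ) {n : ℕ} (hn : 2 ≤ n) (k : ℕ) :
    applyVF (coefF (M * ρ ^ n) ρ (n + 1) 1) (iterMajorant M ρ n k) ≤
      iterMajorant M ρ n (k + 1) := by
  have hs : 2 * k + 1 ≤ (k + 1) * n + 1 := by nlinarith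
  refine (applyVF_coefF_le (by positivity) (by positivity) hρ hs).trans_eq ?_
  rw [iterMajorant, show n + 1 + ((k + 1) * n + 1 - 1) = (k + 1 + 1) * n + 1 by
    rw [Nat.add_sub_cancel]; ring, prod_range_succ]
  push_cast
  congr 1
  ring

lemma iterX_nonneg_and_le_iterMajorant {M ρ : ℝ} (hM : 0 ≤ M) (hρ : 0 ≤ ρ) {n : ℕ}
    (hn : 2 ≤ n) (k : ℕ) : 0 ≤ iterX M ρ n k ∧ iterX M ρ n k ≤ iterMajorant M ρ n k := by
  have hX : 0 ≤ coefF (M * ρ ^ n) ρ (n + 1) 1 := coefF_nonneg (by positivity) hρ _ _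
  induction k with
  | zero => exact ⟨hX, by simp [iterX, iterMajorant]⟩
  | succ k ih =>
    rw [iterX_succ]
    exact ⟨applyVF_nonneg hX ih.1,
      (applyVF_mono hX ih.2).trans (applyVF_iterMajorant_le hM hρ hn k)⟩

lemma pow_le_div_exp_one_pow_mul_exp {x : ℝ} (hx : 0 ≤ x) (r : ℕ) :
    x ^ r ≤ (r / exp 1) ^ r * exp x := by
  rcases r.eq_zero_or_pos with rfl | hr
  · simpa using one_le_exp hx
  have hr' : (0 : ℝ) < r := by exact_mod_cast hr
  have hlin : x ≤ r / exp 1 * exp (x / r) := by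
    have := add_one_le_exp (x / r - 1)
    rw [exp_sub, sub_add_cancel, le_div_iff₀ (exp_pos 1)] at this
    rw [div_mul_eq_mul_div, le_div_iff₀ (exp_pos 1)]
    calc x * exp 1 = r * (x / r * exp 1) := by field_simp
      _ ≤ r * exp (x / r) := by gcongr
  calc x ^ r ≤ (r / exp 1 * exp (x / r)) ^ r := by gcongr
    _ = (r / exp 1) ^ r * exp x := by
      rw [mul_pow, ← exp_nat_mul, mul_div_cancel₀ x hr'.ne']

lemma choose_le_pow_div_log_pow_mul_sqrt {σ : ℝ} (hσ : 1 < σ) {r : ℕ} (hr : r ≠ 0) (N : ℕ) :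
    (N.choose r : ℝ) ≤ σ ^ N / (log σ ^ r * √(2 * π * r)) := by
  have hL : 0 < log σ := log_pos hσ
  have hr' : (0 : ℝ) < r := by exact_mod_cast Nat.pos_of_ne_zero hr
  have hexp : exp (N * log σ) = σ ^ N := by rw [exp_nat_mul, exp_log (by linarith)]
  calc (N.choose r : ℝ) ≤ N ^ r / r.factorial := Nat.choose_le_pow_div r N
    _ = (N * log σ) ^ r / (log σ ^ r * r.factorial) := by rw [mul_pow]; field_simp
    _ ≤ (r / exp 1) ^ r * σ ^ N / (log σ ^ r * (√(2 * π * r) * (r / exp 1) ^ r)) := by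
      rw [← hexp]
      gcongr
      · exact pow_le_div_exp_one_pow_mul_exp (by positivity) r
      · exact Stirling.le_factorial_stirling r
    _ = σ ^ N / (log σ ^ r * √(2 * π * r)) := by field_simp

lemma prod_range_succ_mul_add_one_le (n k : ℕ) :
    ∏ j ∈ range k, ((j + 1) * n + 1) ≤ k.factorial * (n + 1) ^ k := by
  calc ∏ j ∈ range k, ((j + 1) * n + 1) ≤ ∏ j ∈ range k, ((j + 1) * (n + 1)) := by
        gcongr with j; nlinarith
    _ = k.factorial * (n + 1) ^ k := by
        rw [prod_mul_distrib, prod_range_add_one_eq_factorial, prod_const, card_range]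

lemma div_factorial_succ_mul_prod_le (n k : ℕ) :
    (k : ℝ) / (k + 1).factorial * (∏ j ∈ range k, ((j + 1) * n + 1) : ℕ) ≤ (n + 1) ^ k := by
  have hprod : ((∏ j ∈ range k, ((j + 1) * n + 1) : ℕ) : ℝ) ≤ k.factorial * (n + 1) ^ k := by
    exact_mod_cast prod_range_succ_mul_add_one_le n k
  calc (k : ℝ) / (k + 1).factorial * (∏ j ∈ range k, ((j + 1) * n + 1) : ℕ)
      ≤ (k : ℝ) / (k + 1).factorial * (k.factorial * (n + 1) ^ k) := by gcongr
    _ = k / (k + 1) * (n + 1) ^ k := by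
      rw [Nat.factorial_succ]; push_cast; field_simp
    _ ≤ (n + 1) ^ k := by
      refine mul_le_of_le_one_left (by positivity) ?_
      rw [div_le_one (by positivity)]
      linarith

lemma rpow_sub_two_div_two_sq {σ : ℝ} (hσ : 0 ≤ σ) {n : ℕ} (hn : 2 ≤ n) :
    (σ ^ (((n : ℝ) - 2) / 2)) ^ 2 = σ ^ (n - 2) := by
  rw [← rpow_natCast, ← rpow_mul hσ, ← rpow_natCast]
  congr 1
  push_cast [hn]
  ring

lemma sqrt_div_rpow_mul_log_pow {a σ : ℝ} (ha : 0 ≤ a) (hσ : 0 ≤ σ) {n : ℕ} (hn : 2 ≤ n)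
    (k : ℕ) :
    (√a / (σ ^ (((n : ℝ) - 2) / 2) * log σ)) ^ (2 * k) =
      a ^ k / (σ ^ ((n - 2) * k) * log σ ^ (2 * k)) := by
  rw [pow_mul, div_pow, mul_pow, rpow_sub_two_div_two_sq hσ hn, sq_sqrt ha, div_pow, mul_pow,
    ← pow_mul, ← pow_mul, mul_comm 2 k]

lemma div_factorial_succ_mul_iterMajorant_le {ρ M ν σ : ℝ} {n : ℕ} (hρ : 0 ≤ ρ) (hM : 0 ≤ M)
    (hν : 1 ≤ ν) (hn : 2 ≤ n) (hσ : 1 < σ) {k : ℕ} (hk : 1 ≤ k) (m : ℕ) :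
    (k : ℝ) / (k + 1).factorial * iterMajorant M ρ n k m ≤
      M / σ ^ n * ((ν * (n + 1) * M) ^ k / (σ ^ ((n - 2) * k) * log σ ^ (2 * k))) /
        √(k * π) * (σ * ρ) ^ (m - 1) := by
  have hL : 0 < log σ := log_pos hσ
  rcases lt_or_ge m ((k + 1) * n + 1) with hm | hm
  · rw [iterMajorant, coefF, if_neg (by omega), mul_zero]
    positivity
  obtain ⟨j, rfl⟩ := Nat.exists_eq_add_of_le hm
  have hchoose : ((j + 2 * k).choose (2 * k) : ℝ) ≤
      σ ^ (j + 2 * k) / (log σ ^ (2 * k) * √(k * π)) := by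
    refine (choose_le_pow_div_log_pow_mul_sqrt hσ (by omega) _).trans ?_
    gcongr _ / (_ * ?_)
    exact sqrt_le_sqrt (by push_cast; nlinarith [pi_pos])
  have hpow : (n + 1 : ℝ) ^ k * M ^ (k + 1) ≤ (ν * (n + 1) * M) ^ k * M := by
    rw [pow_succ, mul_pow, mul_pow, ← mul_assoc]
    gcongr
    exact le_mul_of_one_le_left (by positivity) (one_le_pow₀ hν)
  have hexp : (k + 1) * n + j = n + (n - 2) * k + (j + 2 * k) := by
    obtain ⟨n, rfl⟩ := Nat.exists_eq_add_of_le hn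
    rw [add_tsub_cancel_left]
    ring
  rw [iterMajorant, coefF, if_pos hm,
    show (k + 1) * n + 1 + j - ((k + 1) * n + 1) + (2 * k + 1 - 1) = j + 2 * k by omega,
    add_tsub_cancel_left]
  calc (k : ℝ) / (k + 1).factorial * ((∏ j ∈ range k, ((j + 1) * n + 1) : ℕ) * M ^ (k + 1) *
        ρ ^ ((k + 1) * n) * ((j + 2 * k).choose (2 * k) : ℕ) * ρ ^ j)
      = (k : ℝ) / (k + 1).factorial * (∏ j ∈ range k, ((j + 1) * n + 1) : ℕ) * M ^ (k + 1) *
        ((j + 2 * k).choose (2 * k) : ℕ) * ρ ^ ((k + 1) * n + j) := by ring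
    _ ≤ (n + 1) ^ k * M ^ (k + 1) * (σ ^ (j + 2 * k) / (log σ ^ (2 * k) * √(k * π))) *
        ρ ^ ((k + 1) * n + j) := by
      gcongr
      exact div_factorial_succ_mul_prod_le n k
    _ ≤ (ν * (n + 1) * M) ^ k * M * (σ ^ (j + 2 * k) / (log σ ^ (2 * k) * √(k * π))) *
        ρ ^ ((k + 1) * n + j) := by gcongr
    _ = _ := by
      rw [show (k + 1) * n + 1 + j - 1 = (k + 1) * n + j by omega, mul_pow σ, hexp]
      field_simp
      ring

lemma abs_div_factorial_mul_iterX_le {ρ M ν σ : ℝ} {n : ℕ} (hρ : 0 ≤ ρ) (hM : 0 ≤ M)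
    (hν : 1 ≤ ν) (hn : 2 ≤ n) (hσ : 1 < σ) {k : ℕ} (hk : 1 ≤ k) (m : ℕ) :
    |(k : ℝ) / (Nat.factorial (k + 1)) * iterX M ρ n k m| ≤
      M / σ ^ n * (√(ν * (n + 1) * M) / (σ ^ (((n : ℝ) - 2) / 2) * log σ)) ^ (2 * k) /
        √(k * π) * (σ * ρ) ^ (m - 1) := by
  obtain ⟨hX₀, hX⟩ := iterX_nonneg_and_le_iterMajorant hM hρ hn k
  rw [abs_of_nonneg (mul_nonneg (by positivity) (hX₀ m)),
    sqrt_div_rpow_mul_log_pow (by positivity) (by linarith) hn]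
  exact (mul_le_mul_of_nonneg_left (hX m) (by positivity)).trans
    (div_factorial_succ_mul_iterMajorant_le hρ hM hν hn hσ hk m)

lemma summable_and_abs_tsum_le_of_abs_le_geometric {f : ℕ → ℝ} {C r : ℝ} (hr₀ : 0 ≤ r)
    (hr₁ : r < 1) (hf : ∀ k, |f k| ≤ C * r ^ (k + 1)) :
    Summable f ∧ |∑' k, f k| ≤ C * r / (1 - r) := by
  have hg : HasSum (fun k ↦ C * r ^ (k + 1)) (C * r / (1 - r)) := by
    simpa only [pow_succ', ← mul_assoc, div_eq_mul_inv] using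
      (hasSum_geometric_of_lt_one hr₀ hr₁).mul_left (C * r)
  exact ⟨.of_norm_bounded hg.summable hf, tsum_of_norm_bounded (f := f) hg hf⟩

/-- In the Banach space `L_{σρ}` (norm: `‖V‖ = sup_m |V_m|/(σρ)^{m-1}`), each
term `(k/(k+1)!) X^{k+1}` of the series has norm at most
`(M/σ^n) q^{2k}/√(kπ)` where `q = √(ν(n+1)M)/(σ^{(n-2)/2} ln σ) < 1`, so the
series converges there with `‖∑_{k≥1} (k/(k+1)!) X^{k+1}‖ ≤
(M/(√π σ^n)) q²/(1-q²)`. -/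
theorem stmt_18 (ρ M ν σ : ℝ) (n : ℕ) (hρ : 0 < ρ) (hM : 0 < M)
    (hν : 1 ≤ ν) (hn : 2 ≤ n) (hσ : 1 < σ)
    (hq : Real.sqrt (ν * (n + 1) * M) / (σ ^ (((n : ℝ) - 2) / 2) * Real.log σ) < 1) :
    (∀ k : ℕ, 1 ≤ k → ∀ m : ℕ,
      |(k : ℝ) / (Nat.factorial (k + 1)) * iterX M ρ n k m| ≤
        M / σ ^ n *
          (Real.sqrt (ν * (n + 1) * M) / (σ ^ (((n : ℝ) - 2) / 2) * Real.log σ)) ^ (2 * k) /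
          Real.sqrt (k * Real.pi) * (σ * ρ) ^ (m - 1)) ∧
    (∀ m : ℕ,
      Summable (fun k : ℕ =>
        ((k + 1 : ℕ) : ℝ) / (Nat.factorial (k + 2)) * iterX M ρ n (k + 1) m)) ∧
    (∀ m : ℕ,
      |∑' k : ℕ, ((k + 1 : ℕ) : ℝ) / (Nat.factorial (k + 2)) * iterX M ρ n (k + 1) m| ≤
        M / (Real.sqrt Real.pi * σ ^ n) *
          (Real.sqrt (ν * (n + 1) * M) / (σ ^ (((n : ℝ) - 2) / 2) * Real.log σ)) ^ 2 /
          (1 - (Real.sqrt (ν * (n + 1) * M) / (σ ^ (((n : ℝ) - 2) / 2) * Real.log σ)) ^ 2) *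
          (σ * ρ) ^ (m - 1)) := by
  have hterm := fun k (hk : 1 ≤ k) m ↦ abs_div_factorial_mul_iterX_le hρ.le hM.le hν hn hσ hk m
  set q := √(ν * (n + 1) * M) / (σ ^ (((n : ℝ) - 2) / 2) * log σ)
  have hq₀ : 0 ≤ q := div_nonneg (sqrt_nonneg _) (mul_nonneg (by positivity) (log_nonneg hσ.le))
  have hseries := fun m ↦ summable_and_abs_tsum_le_of_abs_le_geometric (sq_nonneg q)
    (by nlinarith : q ^ 2 < 1) (C := M / (√π * σ ^ n) * (σ * ρ) ^ (m - 1))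
    fun k ↦ (hterm (k + 1) (Nat.le_add_left 1 k) m).trans <| by
      calc _ ≤ M / σ ^ n * (q ^ 2) ^ (k + 1) / √π * (σ * ρ) ^ (m - 1) := by
            rw [pow_mul]
            gcongr
            push_cast
            nlinarith [pi_pos]
        _ = _ := by ring
  exact ⟨hterm, fun m ↦ (hseries m).1, fun m ↦ (hseries m).2.trans_eq (by ring)⟩
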